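/- Let b > 0 and define q : (0, ∞) → ℝ by q(x) = e^{b x²/2} / ( b·∫₀ˣ e^{b s²/2} ds ). Then q is well-defined and differentiable on (0,∞) and satisfies q'(x) = b·q(x)·( x − q(x) ) for all x > 0. Moreover, x·q(x) → 1/b as x → 0⁺, and q(x)/x → 1 as x → ∞. -/

import Mathlib

/-!
Write `f(s) = e^{bs²/2}` and `F(x) = ∫₀ˣ f`, so that `q = f / (b F)`. Since `F' = f` and
`f' = b x f`, the quotient rule gives `q' = b x q - b q²`. Near `0`, `F(x)/x → f(0) = 1`.
At infinity, `b x F(x) / f(x) → 1`: the bound `s ≤ x` under `∫₀ˣ s f(s) ds = (f(x) - 1)/b`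
gives `b x F(x) ≥ f(x) - 1`, and splitting `[0, x]` at `c x` with `c < 1` gives
`b x F(x) ≤ b c x² f(c x) + f(x)/c`, where `f(c x)/f(x) = e^{-b(1-c²)x²/2}` kills `x²`.
-/

open Real Filter

/-- The special solution `q(x) = e^{bx²/2} / (b·∫₀ˣ e^{bs²/2} ds)` of
`q' = b·q·(x − q)`, corresponding to the strong unstable manifold `W^{uu}`. -/
noncomputable def q13 (b x : ℝ) : ℝ :=
  Real.exp (b * x ^ 2 / 2) / (b * ∫ s in (0:ℝ)..x, Real.exp (b * s ^ 2 / 2))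

open Topology

noncomputable def expSqPrimitive (b x : ℝ) : ℝ :=
  ∫ s in (0:ℝ)..x, exp (b * s ^ 2 / 2)

section

variable {b x : ℝ}

theorem continuous_exp_mul_sq_div_two (b : ℝ) :
    Continuous fun s : ℝ => exp (b * s ^ 2 / 2) := by
  fun_prop

theorem hasDerivAt_exp_mul_sq_div_two (b x : ℝ) :
    HasDerivAt (fun s : ℝ => exp (b * s ^ 2 / 2)) (b * x * exp (b * x ^ 2 / 2)) x := by
  convert (((hasDerivAt_pow 2 x).const_mul b).div_const 2).exp using 1
  ring

theorem hasDerivAt_expSqPrimitive (b x : ℝ) :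
    HasDerivAt (expSqPrimitive b) (exp (b * x ^ 2 / 2)) x :=
  ((continuous_exp_mul_sq_div_two b).integral_hasStrictDerivAt 0 x).hasDerivAt

theorem expSqPrimitive_pos (b : ℝ) (hx : 0 < x) : 0 < expSqPrimitive b x :=
  intervalIntegral.intervalIntegral_pos_of_pos
    ((continuous_exp_mul_sq_div_two b).intervalIntegrable _ _) (fun _ => exp_pos _) hx

theorem integral_mul_exp_mul_sq_div_two (hb : b ≠ 0) (u v : ℝ) :
    ∫ s in u..v, s * exp (b * s ^ 2 / 2) = (exp (b * v ^ 2 / 2) - exp (b * u ^ 2 / 2)) / b := by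
  have hderiv : ∀ t ∈ Set.uIcc u v,
      HasDerivAt (fun s => exp (b * s ^ 2 / 2) / b) (t * exp (b * t ^ 2 / 2)) t := fun t _ =>
    ((hasDerivAt_exp_mul_sq_div_two b t).div_const b).congr_deriv (by field_simp)
  rw [intervalIntegral.integral_eq_sub_of_hasDerivAt hderiv
    ((continuous_id.mul (continuous_exp_mul_sq_div_two b)).intervalIntegrable _ _), sub_div]

theorem exp_mul_sq_div_two_sub_one_le (hb : 0 < b) (hx : 0 ≤ x) :
    exp (b * x ^ 2 / 2) - 1 ≤ b * x * expSqPrimitive b x := by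
  have hmono : ∫ s in (0:ℝ)..x, s * exp (b * s ^ 2 / 2) ≤ x * expSqPrimitive b x := by
    rw [expSqPrimitive, ← intervalIntegral.integral_const_mul]
    refine intervalIntegral.integral_mono_on hx
      ((continuous_id.mul (continuous_exp_mul_sq_div_two b)).intervalIntegrable _ _)
      ((continuous_const.mul (continuous_exp_mul_sq_div_two b)).intervalIntegrable _ _)
      fun s hs => mul_le_mul_of_nonneg_right hs.2 (exp_pos _).le
  rw [integral_mul_exp_mul_sq_div_two hb.ne', div_le_iff₀ hb] at hmono
  simpa [mul_comm, mul_left_comm] using hmono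

theorem expSqPrimitive_le_mul_exp (hb : 0 ≤ b) (hx : 0 ≤ x) :
    expSqPrimitive b x ≤ x * exp (b * x ^ 2 / 2) := by
  have hmono : expSqPrimitive b x ≤ ∫ _ in (0:ℝ)..x, exp (b * x ^ 2 / 2) := by
    refine intervalIntegral.integral_mono_on hx
      ((continuous_exp_mul_sq_div_two b).intervalIntegrable _ _)
      (continuous_const.intervalIntegrable _ _) fun s hs => ?_
    gcongr
    exacts [hs.1, hs.2]
  simpa using hmono

theorem integral_exp_mul_sq_div_two_le {y : ℝ} (hb : 0 < b) (hy : 0 < y) (hyx : y ≤ x) :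
    ∫ s in y..x, exp (b * s ^ 2 / 2) ≤ exp (b * x ^ 2 / 2) / (b * y) := by
  have hmono :
      ∫ s in y..x, exp (b * s ^ 2 / 2) ≤ ∫ s in y..x, s * exp (b * s ^ 2 / 2) / y := by
    refine intervalIntegral.integral_mono_on hyx
      ((continuous_exp_mul_sq_div_two b).intervalIntegrable _ _)
      (((continuous_id.mul (continuous_exp_mul_sq_div_two b)).div_const y).intervalIntegrable _ _)
      fun s hs => ?_
    rw [le_div_iff₀ hy, mul_comm]
    exact mul_le_mul_of_nonneg_right hs.1 (exp_pos _).le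
  calc ∫ s in y..x, exp (b * s ^ 2 / 2)
      ≤ (exp (b * x ^ 2 / 2) - exp (b * y ^ 2 / 2)) / b / y := by
        rwa [intervalIntegral.integral_div, integral_mul_exp_mul_sq_div_two hb.ne'] at hmono
    _ ≤ exp (b * x ^ 2 / 2) / (b * y) := by
        rw [div_div]
        gcongr
        exact sub_le_self _ (exp_pos _).le

theorem mul_expSqPrimitive_le {c : ℝ} (hb : 0 < b) (hc₀ : 0 < c) (hc₁ : c ≤ 1)
    (hx : 0 < x) :
    b * x * expSqPrimitive b x
      ≤ b * c * x ^ 2 * exp (b * (c * x) ^ 2 / 2) + exp (b * x ^ 2 / 2) / c := by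
  have hcx : 0 < c * x := mul_pos hc₀ hx
  have hsplit : expSqPrimitive b x
      = expSqPrimitive b (c * x) + ∫ s in c * x..x, exp (b * s ^ 2 / 2) :=
    (intervalIntegral.integral_add_adjacent_intervals
      ((continuous_exp_mul_sq_div_two b).intervalIntegrable _ _)
      ((continuous_exp_mul_sq_div_two b).intervalIntegrable _ _)).symm
  have hhead := expSqPrimitive_le_mul_exp hb.le hcx.le
  have htail := integral_exp_mul_sq_div_two_le hb hcx (mul_le_of_le_one_left hx.le hc₁)
  calc b * x * expSqPrimitive b x
      ≤ b * x * (c * x * exp (b * (c * x) ^ 2 / 2) + exp (b * x ^ 2 / 2) / (b * (c * x))) := by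
        rw [hsplit]
        gcongr
    _ = _ := by field_simp

theorem tendsto_sq_mul_exp_neg_mul_sq_atTop {k : ℝ} (hk : 0 < k) :
    Tendsto (fun x : ℝ => x ^ 2 * exp (-(k * x ^ 2))) atTop (𝓝 0) := by
  have h := ((tendsto_pow_mul_exp_neg_atTop_nhds_zero 1).comp
    ((tendsto_pow_atTop two_ne_zero).const_mul_atTop hk)).div_const k
  rw [zero_div] at h
  refine h.congr fun x => ?_
  simp only [Function.comp_apply, pow_one]
  field_simp

theorem eventually_lt_mul_expSqPrimitive_div_exp {a : ℝ} (hb : 0 < b) (ha : a < 1) :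
    ∀ᶠ x in atTop, a < b * x * expSqPrimitive b x / exp (b * x ^ 2 / 2) := by
  have hlower : Tendsto (fun x : ℝ => 1 - exp (-(b * x ^ 2 / 2))) atTop (𝓝 1) := by
    simpa using (tendsto_exp_neg_atTop_nhds_zero.comp
      ((tendsto_pow_atTop two_ne_zero).const_mul_atTop hb |>.atTop_div_const two_pos)).const_sub 1
  filter_upwards [hlower.eventually_const_lt ha, eventually_ge_atTop 0] with x hax hx
  refine hax.trans_le ?_
  rw [le_div_iff₀ (exp_pos _), sub_mul, one_mul, ← exp_add, neg_add_cancel, exp_zero]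
  exact exp_mul_sq_div_two_sub_one_le hb hx

theorem eventually_mul_expSqPrimitive_div_exp_lt {a : ℝ} (hb : 0 < b) (ha : 1 < a) :
    ∀ᶠ x in atTop, b * x * expSqPrimitive b x / exp (b * x ^ 2 / 2) < a := by
  -- `1 / c = (1 + a) / 2` lies strictly between `1` and `a`
  set c := 2 / (1 + a)
  have hc₀ : 0 < c := by positivity
  have hc₁ : c < 1 := by rw [div_lt_one (by linarith)]; linarith
  have h1c : 1 / c < a := by
    simp only [c, one_div_div]
    linarith
  have hk : 0 < b * (1 - c ^ 2) / 2 := by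
    have : 0 < 1 - c ^ 2 := by nlinarith
    positivity
  have hupper := ((tendsto_sq_mul_exp_neg_mul_sq_atTop hk).const_mul (b * c)).add_const (1 / c)
  rw [mul_zero, zero_add] at hupper
  filter_upwards [hupper.eventually_lt_const h1c, eventually_gt_atTop 0] with x hxa hx
  refine lt_of_le_of_lt ?_ hxa
  have hexp : exp (-(b * (1 - c ^ 2) / 2 * x ^ 2)) * exp (b * x ^ 2 / 2)
      = exp (b * (c * x) ^ 2 / 2) := by
    rw [← exp_add]
    ring_nf
  rw [div_le_iff₀ (exp_pos _), add_mul, mul_assoc (b * c), mul_assoc (x ^ 2), hexp,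
    one_div_mul_eq_div]
  exact (mul_expSqPrimitive_le hb hc₀ hc₁.le hx).trans_eq (by ring)

theorem tendsto_mul_expSqPrimitive_div_exp_atTop (hb : 0 < b) :
    Tendsto (fun x => b * x * expSqPrimitive b x / exp (b * x ^ 2 / 2)) atTop (𝓝 1) :=
  tendsto_order.2 ⟨fun _ ha => eventually_lt_mul_expSqPrimitive_div_exp hb ha,
    fun _ ha => eventually_mul_expSqPrimitive_div_exp_lt hb ha⟩

theorem q13_eq_div_expSqPrimitive (b : ℝ) :
    q13 b = fun x => exp (b * x ^ 2 / 2) / (b * expSqPrimitive b x) :=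
  rfl

theorem hasDerivAt_q13 (hb : b ≠ 0) (hx : 0 < x) :
    HasDerivAt (q13 b) (b * q13 b x * (x - q13 b x)) x := by
  have hF := (expSqPrimitive_pos b hx).ne'
  rw [q13_eq_div_expSqPrimitive]
  exact ((hasDerivAt_exp_mul_sq_div_two b x).div ((hasDerivAt_expSqPrimitive b x).const_mul b)
    (mul_ne_zero hb hF)).congr_deriv (by field_simp)

theorem tendsto_expSqPrimitive_div_self_nhdsGT_zero (b : ℝ) :
    Tendsto (fun x => expSqPrimitive b x / x) (𝓝[>] 0) (𝓝 1) := by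
  have h := (hasDerivAt_expSqPrimitive b 0).tendsto_slope_zero_right
  have h0 : expSqPrimitive b 0 = 0 := intervalIntegral.integral_same
  simpa [h0, div_eq_inv_mul] using h

theorem tendsto_mul_q13_nhdsGT_zero (hb : b ≠ 0) :
    Tendsto (fun x => x * q13 b x) (𝓝[>] 0) (𝓝 (1 / b)) := by
  have hnum : Tendsto (fun x : ℝ => exp (b * x ^ 2 / 2)) (𝓝[>] 0) (𝓝 1) := by
    simpa using ((continuous_exp_mul_sq_div_two b).tendsto 0).mono_left nhdsWithin_le_nhds
  have hden := (tendsto_expSqPrimitive_div_self_nhdsGT_zero b).const_mul b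
  rw [mul_one] at hden
  refine (hnum.div hden hb).congr' ?_
  filter_upwards [self_mem_nhdsWithin] with x (hx : 0 < x)
  simp only [Pi.div_apply, q13_eq_div_expSqPrimitive]
  field_simp

theorem tendsto_q13_div_self_atTop (hb : 0 < b) :
    Tendsto (fun x => q13 b x / x) atTop (𝓝 1) := by
  simpa [q13_eq_div_expSqPrimitive, div_div, mul_right_comm] using
    (tendsto_mul_expSqPrimitive_div_exp_atTop hb).inv₀ one_ne_zero

end

/-- `q13` is well-defined (positive denominator) and differentiable on `(0,∞)` and
satisfies `q' = b q (x − q)` there; moreover `x·q(x) → 1/b` as `x → 0⁺` and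
`q(x)/x → 1` as `x → ∞`. -/
theorem stmt13 (b : ℝ) (hb : 0 < b) :
    (∀ x : ℝ, 0 < x → 0 < b * ∫ s in (0:ℝ)..x, Real.exp (b * s ^ 2 / 2)) ∧
    (∀ x : ℝ, 0 < x →
      HasDerivAt (q13 b) (b * q13 b x * (x - q13 b x)) x) ∧
    Tendsto (fun x : ℝ => x * q13 b x) (nhdsWithin 0 (Set.Ioi 0)) (nhds (1 / b)) ∧
    Tendsto (fun x : ℝ => q13 b x / x) atTop (nhds 1) :=
  ⟨fun _ hx => mul_pos hb (expSqPrimitive_pos b hx), fun _ hx => hasDerivAt_q13 hb.ne' hx,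
    tendsto_mul_q13_nhdsGT_zero hb.ne', tendsto_q13_div_self_atTop hb⟩
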